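/- Let S be an integer-valued random variable, let D ∼ Bernoulli(p) and D' ∼ Bernoulli(q) be independent of S, and let N be an independent Laplace random variable with scale θ ≥ 1/ε, ε > 0. Let f and f' be the densities of S + D + N and S + D' + N respectively. Then e^{-ε} ≤ f(y)/f'(y) ≤ e^ε for all y ∈ ℝ where f'(y) > 0. -/
import Mathlib


open MeasureTheory

/-- The Laplace density with scale parameter `θ`. -/
noncomputable def lap (θ z : ℝ) : ℝ := (1 / (2 * θ)) * Real.exp (-|z| / θ)

/-- The Bernoulli(p) distribution on `ℤ`. -/
noncomputable def bern (p : ℝ) : Measure ℤ :=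
  ENNReal.ofReal p • Measure.dirac (1 : ℤ) + ENNReal.ofReal (1 - p) • Measure.dirac (0 : ℤ)

lemma lap_nonneg {θ : ℝ} (hθ : 0 < θ) (z : ℝ) : 0 ≤ lap θ z := by
  unfold lap
  positivity

lemma lap_le {θ ε : ℝ} (hε : 0 < ε) (hθ : 1 / ε ≤ θ) {a b : ℝ} (h : |a - b| ≤ 1) :
    lap θ a ≤ Real.exp ε * lap θ b := by
  have hθ0 : 0 < θ := lt_of_lt_of_le (by positivity) hθ
  have hinv : 1 / θ ≤ ε := by
    rw [div_le_iff₀ hθ0]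
    calc (1 : ℝ) = ε * (1 / ε) := by field_simp
    _ ≤ ε * θ := by nlinarith
  have habs : |b| ≤ |a| + 1 := by
    have := abs_sub_abs_le_abs_sub b a
    rw [abs_sub_comm] at this
    linarith
  unfold lap
  rw [mul_comm (Real.exp ε), mul_assoc, ← Real.exp_add]
  apply mul_le_mul_of_nonneg_left _ (by positivity)
  apply Real.exp_le_exp.2
  have h1 : 1 ≤ ε * θ := by
    rw [div_le_iff₀ hθ0] at hinv; linarith
  rw [div_add' _ _ _ (ne_of_gt hθ0), div_le_div_iff₀ hθ0 hθ0]
  exact mul_le_mul_of_nonneg_right (by linarith) hθ0.le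

lemma bern_prob {p : ℝ} (hp0 : 0 ≤ p) (hp1 : p ≤ 1) : IsProbabilityMeasure (bern p) := by
  constructor
  simp only [bern, Measure.add_apply, Measure.smul_apply, measure_univ, smul_eq_mul, mul_one]
  rw [← ENNReal.ofReal_add hp0 (by linarith)]
  norm_num

lemma integrable_dirac' {α : Type*} [MeasurableSpace α] [MeasurableSingletonClass α]
    (h : α → ℝ) (hm : Measurable h) (a : α) : Integrable h (Measure.dirac a) :=
  ⟨hm.aestronglyMeasurable, by
    simp only [HasFiniteIntegral, lintegral_dirac]
    exact ENNReal.coe_lt_top⟩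

lemma integral_bern {p : ℝ} (hp0 : 0 ≤ p) (hp1 : p ≤ 1) (h : ℤ → ℝ) :
    ∫ l, h l ∂(bern p) = p * h 1 + (1 - p) * h 0 := by
  have hm : Measurable h := measurable_of_countable h
  rw [bern, integral_add_measure, integral_smul_measure, integral_smul_measure,
    integral_dirac, integral_dirac]
  · simp [ENNReal.toReal_ofReal hp0, ENNReal.toReal_ofReal (by linarith : (0:ℝ) ≤ 1 - p)]
  · exact (integrable_dirac' h hm 1).smul_measure ENNReal.ofReal_ne_top
  · exact (integrable_dirac' h hm 0).smul_measure ENNReal.ofReal_ne_top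

lemma integrable_bdd {α : Type*} [MeasurableSpace α] [Countable α] [MeasurableSingletonClass α]
    {ν : Measure α} [IsFiniteMeasure ν] {g : α → ℝ} {C : ℝ}
    (hg : ∀ k, ‖g k‖ ≤ C) : Integrable g ν :=
  ⟨(measurable_of_countable g).aestronglyMeasurable,
    HasFiniteIntegral.of_bounded (C := C) (Filter.Eventually.of_forall hg)⟩

lemma integral_conv (μ ν : Measure ℤ) [IsProbabilityMeasure μ] [IsProbabilityMeasure ν]
    (g : ℤ → ℝ) (C : ℝ) (hg : ∀ k, ‖g k‖ ≤ C) :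
    ∫ k, g k ∂(μ.conv ν) = ∫ k, (∫ l, g (k + l) ∂ν) ∂μ := by
  have hadd : Measurable (fun x : ℤ × ℤ => x.1 + x.2) := measurable_of_countable _
  rw [Measure.conv, integral_map hadd.aemeasurable
    (measurable_of_countable g).aestronglyMeasurable]
  exact integral_prod _ (integrable_bdd (C := C) (fun x => hg _))

/-- Pufferfish privacy for Bernoulli user distributions: for `S ∼ μ` integer-valued,
independent `D ∼ Bernoulli(p)`, `D' ∼ Bernoulli(q)` and independent Laplace noise `N`
with scale `θ ≥ 1/ε`, the densities `f, f'` of `S + D + N` and `S + D' + N` satisfy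
`e^{-ε} ≤ f(y)/f'(y) ≤ e^ε` wherever `f'(y) > 0`. -/
theorem bernoulli_pufferfish (μ : Measure ℤ) [IsProbabilityMeasure μ]
    (p q ε θ : ℝ) (hp0 : 0 ≤ p) (hp1 : p ≤ 1) (hq0 : 0 ≤ q) (hq1 : q ≤ 1)
    (hε : 0 < ε) (hθ : 1 / ε ≤ θ) (y : ℝ)
    (hpos : 0 < ∫ k, lap θ (y - (k : ℝ)) ∂(μ.conv (bern q))) :
    Real.exp (-ε) ≤ (∫ k, lap θ (y - (k : ℝ)) ∂(μ.conv (bern p))) /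
        (∫ k, lap θ (y - (k : ℝ)) ∂(μ.conv (bern q))) ∧
    (∫ k, lap θ (y - (k : ℝ)) ∂(μ.conv (bern p))) /
        (∫ k, lap θ (y - (k : ℝ)) ∂(μ.conv (bern q))) ≤ Real.exp ε := by
  have hθ0 : 0 < θ := lt_of_lt_of_le (by positivity) hθ
  have hE1 : (1 : ℝ) ≤ Real.exp ε := Real.one_le_exp hε.le
  -- bound on lap
  have hbd : ∀ k : ℤ, ‖lap θ (y - (k : ℝ))‖ ≤ 1 / (2 * θ) := by
    intro k
    rw [Real.norm_eq_abs, abs_of_nonneg (lap_nonneg hθ0 _)]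
    unfold lap
    have : Real.exp (-|y - (k:ℝ)| / θ) ≤ 1 := by
      apply Real.exp_le_one_iff.2
      apply div_nonpos_of_nonpos_of_nonneg (neg_nonpos.2 (abs_nonneg _)) hθ0.le
    nlinarith [this, (by positivity : (0:ℝ) < 1 / (2*θ))]
  -- rewrite the two integrals
  have key : ∀ r : ℝ, 0 ≤ r → r ≤ 1 →
      (∫ k, lap θ (y - (k : ℝ)) ∂(μ.conv (bern r))) =
      ∫ k : ℤ, (r * lap θ (y - ((k:ℝ) + 1)) + (1 - r) * lap θ (y - (k:ℝ))) ∂μ := by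
    intro r hr0 hr1
    have := bern_prob hr0 hr1
    rw [integral_conv μ (bern r) _ (1 / (2*θ)) hbd]
    congr 1
    funext k
    rw [integral_bern hr0 hr1]
    push_cast
    ring_nf
  -- pointwise inequality between mixed densities
  have hpt : ∀ (r s : ℝ), 0 ≤ r → r ≤ 1 → 0 ≤ s → s ≤ 1 → ∀ k : ℤ,
      r * lap θ (y - ((k:ℝ) + 1)) + (1 - r) * lap θ (y - (k:ℝ)) ≤
      Real.exp ε * (s * lap θ (y - ((k:ℝ) + 1)) + (1 - s) * lap θ (y - (k:ℝ))) := by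
    intro r s hr0 hr1 hs0 hs1 k
    set A := lap θ (y - ((k:ℝ) + 1)) with hA
    set B := lap θ (y - (k:ℝ)) with hB
    have hA0 : 0 ≤ A := lap_nonneg hθ0 _
    have hB0 : 0 ≤ B := lap_nonneg hθ0 _
    have hAB : A ≤ Real.exp ε * B := lap_le hε hθ (by rw [abs_of_nonpos] <;> ring_nf <;> norm_num)
    have hBA : B ≤ Real.exp ε * A := lap_le hε hθ (by rw [abs_of_nonneg] <;> ring_nf <;> norm_num)
    rcases le_total A B with h | h
    · have h1 : A ≤ s * A + (1 - s) * B := by nlinarith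
      have h2 : r * A + (1 - r) * B ≤ B := by nlinarith
      calc r * A + (1 - r) * B ≤ B := h2
        _ ≤ Real.exp ε * A := hBA
        _ ≤ Real.exp ε * (s * A + (1 - s) * B) := by nlinarith
    · have h1 : B ≤ s * A + (1 - s) * B := by nlinarith
      have h2 : r * A + (1 - r) * B ≤ A := by nlinarith
      calc r * A + (1 - r) * B ≤ A := h2
        _ ≤ Real.exp ε * B := hAB
        _ ≤ Real.exp ε * (s * A + (1 - s) * B) := by nlinarith
  -- integrability of the mixed densities
  have hint : ∀ (r : ℝ), 0 ≤ r → r ≤ 1 → Integrable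
      (fun k : ℤ => r * lap θ (y - ((k:ℝ) + 1)) + (1 - r) * lap θ (y - (k:ℝ))) μ := by
    intro r hr0 hr1
    apply integrable_bdd (C := r * (1/(2*θ)) + (1 - r) * (1/(2*θ)))
    intro k
    have h1 := hbd (k + 1)
    have h2 := hbd k
    rw [Real.norm_eq_abs] at *
    push_cast at h1
    rw [abs_le] at *
    constructor <;> nlinarith
  -- the two directional inequalities at the level of integrals
  have hmono : ∀ (r s : ℝ), 0 ≤ r → r ≤ 1 → 0 ≤ s → s ≤ 1 →
      (∫ k, lap θ (y - (k : ℝ)) ∂(μ.conv (bern r))) ≤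
      Real.exp ε * (∫ k, lap θ (y - (k : ℝ)) ∂(μ.conv (bern s))) := by
    intro r s hr0 hr1 hs0 hs1
    rw [key r hr0 hr1, key s hs0 hs1, ← integral_const_mul]
    exact integral_mono (hint r hr0 hr1) ((hint s hs0 hs1).const_mul _)
      (hpt r s hr0 hr1 hs0 hs1)
  have h1 := hmono p q hp0 hp1 hq0 hq1
  have h2 := hmono q p hq0 hq1 hp0 hp1
  have hE0 : 0 < Real.exp ε := Real.exp_pos ε
  constructor
  · rw [le_div_iff₀ hpos, Real.exp_neg]
    rw [inv_mul_le_iff₀ hE0] at *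
    calc _ ≤ _ := h2
      _ ≤ _ := le_refl _
  · rw [div_le_iff₀ hpos]
    exact h1
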